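/- arXiv:1602.06208 — 7 statements merged into one kernel-verified Lean document; each statement's English description precedes it below -/
import Mathlib

section
/- For every integer base g ≥ 3, there exists a constant c < 1 such that for all sufficiently large x, the number of integers n ≤ x that are a sum of two base g palindromes is at most c·x. -/
def IsBasePalindrome (g n : ℕ) : Prop := Nat.digits g n = (Nat.digits g n).reverse

/-!
Fix `g ≥ 2` and `k`. No `n` with `n ≡ 1 [MOD g ^ 2]` and
`g ^ (k + 2) + g ^ (k + 1) ≤ n < g ^ (k + 2) + g ^ (k + 1) + g ^ k` (leading digits `1 1 0`, last
digits `0 1`) is a sum `p + q` of two palindromes. If `p ≥ g ^ (k + 2)`, the leading digit of `p`,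
hence its last digit, is `1`, so `g ∣ q`, which forces `q = 0`; but `n` is not a palindrome.
Otherwise `p` and `q` both have `k + 2` digits, and their nonzero last digits `a`, `b` satisfy
`a + b = g + 1`. Since the leading two-digit block of a palindrome is its lowest block reversed,
the leading blocks of `p` and `q` add up to at least `g * (g + 1)`. As
`n < (g ^ 2 + g + 1) * g ^ k`, both second-lowest digits must vanish, and then
`n ≡ a + b = g + 1 [MOD g ^ 2]`.

With `k = j + 2` this gives `g ^ j` such `n` below `g ^ (j + 5)`, hence at least `N / g ^ 6`
numbers below any `N ≥ g ^ 5` that are not sums of two palindromes.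
-/

theorem pow_add_pow_add_pow_lt {g : ℕ} (hg : 2 ≤ g) (k : ℕ) :
    g ^ (k + 2) + g ^ (k + 1) + g ^ k < g ^ (k + 3) := by
  have h : g * g + g + 1 < g * g * g := by nlinarith
  calc g ^ (k + 2) + g ^ (k + 1) + g ^ k = (g * g + g + 1) * g ^ k := by ring
    _ < g * g * g * g ^ k := Nat.mul_lt_mul_of_pos_right h (by positivity)
    _ = g ^ (k + 3) := by ring

theorem mod_eq_one_and_div_mod_eq_zero_of_mod_sq_eq_one {g n : ℕ} (hg : 2 ≤ g)
    (h : n % g ^ 2 = 1) : n % g = 1 ∧ n / g % g = 0 := by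
  rw [sq, Nat.mod_mul] at h
  have : n / g % g = 0 := by
    by_contra h0
    have : g ≤ g * (n / g % g) := Nat.le_mul_of_pos_right g (Nat.pos_of_ne_zero h0)
    omega
  rw [this, mul_zero, add_zero] at h
  exact ⟨h, this⟩

namespace IsBasePalindrome

variable {g p : ℕ}

theorem div_pow_mod_eq (hg : 2 ≤ g) (hp : IsBasePalindrome g p) {e i : ℕ}
    (hlow : g ^ e ≤ p) (hhigh : p < g ^ (e + 1)) (hi : i ≤ e) :
    p / g ^ i % g = p / g ^ (e - i) % g := by
  have hlen : (Nat.digits g p).length = e + 1 := by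
    rw [Nat.length_digits g p hg (lt_of_lt_of_le (by positivity) hlow).ne',
      Nat.log_eq_of_pow_le_of_lt_pow hlow hhigh]
  calc p / g ^ i % g = (Nat.digits g p).getD i 0 := (Nat.getD_digits p i hg).symm
    _ = (Nat.digits g p).reverse.getD i 0 := by rw [← hp]
    _ = p / g ^ (e - i) % g := by
      rw [List.getD_reverse i (by omega), hlen, Nat.getD_digits p _ hg, Nat.add_sub_cancel]

theorem mod_ne_zero (hg : 2 ≤ g) (hp : IsBasePalindrome g p) (hp0 : p ≠ 0) : p % g ≠ 0 := by
  have hlow := Nat.pow_log_le_self g hp0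
  have hhigh := Nat.lt_pow_succ_log_self hg p
  have hlead : p / g ^ Nat.log g p < g := by
    rw [Nat.div_lt_iff_lt_mul (by positivity), ← pow_succ']; exact hhigh
  have hlead_pos : 0 < p / g ^ Nat.log g p := Nat.div_pos hlow (by positivity)
  have h0 := hp.div_pow_mod_eq hg hlow hhigh (Nat.zero_le _)
  rw [pow_zero, Nat.div_one, Nat.sub_zero, Nat.mod_eq_of_lt hlead] at h0
  exact h0 ▸ hlead_pos.ne'

theorem div_pow_eq (hg : 2 ≤ g) (hp : IsBasePalindrome g p) {k : ℕ}
    (hlow : g ^ (k + 1) ≤ p) (hhigh : p < g ^ (k + 2)) :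
    p / g ^ k = g * (p % g) + p / g % g := by
  have htop : p / g ^ (k + 1) < g := by
    rw [Nat.div_lt_iff_lt_mul (by positivity), ← pow_succ']
    exact hhigh
  have h0 := hp.div_pow_mod_eq hg hlow hhigh (Nat.zero_le _)
  have h1 := hp.div_pow_mod_eq hg hlow hhigh (i := 1) (by omega)
  simp only [pow_zero, Nat.div_one, Nat.sub_zero, pow_one, Nat.add_sub_cancel] at h0 h1
  rw [h0, h1, Nat.mod_eq_of_lt htop, pow_succ, ← Nat.div_div_eq_div_mul, Nat.div_add_mod]

theorem add_mod_sq_ne_one_of_lt (hg : 2 ≤ g) {q k : ℕ} (hp : IsBasePalindrome g p)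
    (hq : IsBasePalindrome g q) (hpk : p < g ^ (k + 2)) (hqk : q < g ^ (k + 2))
    (hlow : g ^ (k + 2) + g ^ (k + 1) ≤ p + q)
    (hhigh : p + q < g ^ (k + 2) + g ^ (k + 1) + g ^ k) : (p + q) % g ^ 2 ≠ 1 := by
  intro hmod
  have hA := hp.div_pow_eq hg (by omega) hpk
  have hB := hq.div_pow_eq hg (by omega) hqk
  obtain ⟨hn1, -⟩ := mod_eq_one_and_div_mod_eq_zero_of_mod_sq_eq_one hg hmod
  set a := p % g
  set b := q % g
  have ha : a < g := Nat.mod_lt _ (by omega)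
  have hb : b < g := Nat.mod_lt _ (by omega)
  have ha0 : a ≠ 0 := hp.mod_ne_zero hg (by omega)
  have hb0 : b ≠ 0 := hq.mod_ne_zero hg (by omega)
  have hab : a + b = g + 1 := by
    rw [Nat.add_mod] at hn1
    rcases Nat.lt_or_ge (a + b) g with h | h
    · rw [Nat.mod_eq_of_lt h] at hn1; omega
    · rw [Nat.mod_eq_sub_mod h, Nat.mod_eq_of_lt (by omega)] at hn1; omega
  have hblocks : (g * (g + 1) + (p / g % g + q / g % g)) * g ^ k < (g * g + g + 1) * g ^ k :=
    calc (g * (g + 1) + (p / g % g + q / g % g)) * g ^ k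
        = p / g ^ k * g ^ k + q / g ^ k * g ^ k := by rw [hA, hB, ← hab]; ring
      _ ≤ p + q := Nat.add_le_add (Nat.div_mul_le_self p _) (Nat.div_mul_le_self q _)
      _ < g ^ (k + 2) + g ^ (k + 1) + g ^ k := hhigh
      _ = (g * g + g + 1) * g ^ k := by ring
  have hsq : g * (g + 1) = g * g + g := by ring
  obtain ⟨ha', hb'⟩ : p / g % g = 0 ∧ q / g % g = 0 := by
    have := Nat.lt_of_mul_lt_mul_right hblocks
    omega
  have hp2 : p % g ^ 2 = a := by rw [sq, Nat.mod_mul, ha', mul_zero, add_zero]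
  have hq2 : q % g ^ 2 = b := by rw [sq, Nat.mod_mul, hb', mul_zero, add_zero]
  rw [Nat.add_mod, hp2, hq2, hab, Nat.mod_eq_of_lt (by nlinarith)] at hmod
  omega

theorem add_mod_sq_ne_one_of_le (hg : 2 ≤ g) {q k : ℕ} (hp : IsBasePalindrome g p)
    (hq : IsBasePalindrome g q) (hpk : g ^ (k + 2) ≤ p)
    (hlow : g ^ (k + 2) + g ^ (k + 1) ≤ p + q)
    (hhigh : p + q < g ^ (k + 2) + g ^ (k + 1) + g ^ k) : (p + q) % g ^ 2 ≠ 1 := by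
  intro hmod
  obtain ⟨hn1, hn2⟩ := mod_eq_one_and_div_mod_eq_zero_of_mod_sq_eq_one hg hmod
  have hp3 : p < g ^ (k + 3) := by have := pow_add_pow_add_pow_lt hg k; omega
  have hA := hp.div_pow_eq hg (k := k + 1) hpk hp3
  have hlead_ge : g ≤ p / g ^ (k + 1) :=
    (Nat.le_div_iff_mul_le (by positivity)).2 (by rw [← pow_succ']; exact hpk)
  have hlead_lt : p / g ^ (k + 1) < g + 2 := by
    rw [Nat.div_lt_iff_lt_mul (by positivity)]
    calc p ≤ p + q := Nat.le_add_right p q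
      _ < g ^ (k + 2) + g ^ (k + 1) + g ^ k := hhigh
      _ ≤ g ^ (k + 2) + g ^ (k + 1) + g ^ (k + 1) := by
        have := Nat.pow_le_pow_right (by omega : 0 < g) (by omega : k ≤ k + 1); omega
      _ = (g + 2) * g ^ (k + 1) := by ring
  have hp1 : p % g = 1 := by
    have hd : p / g % g < g := Nat.mod_lt _ (by omega)
    rw [hA] at hlead_ge hlead_lt
    rcases Nat.lt_trichotomy (p % g) 1 with h | h | h
    · rw [Nat.lt_one_iff.1 h] at hlead_ge; omega
    · exact h
    · have := Nat.mul_le_mul_left g (Nat.succ_le_of_lt h); omega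
  have hq0 : q = 0 := by
    by_contra hq0
    have : q ≡ 0 [MOD g] :=
      Nat.ModEq.add_left_cancel' p (by rw [Nat.ModEq, add_zero, hn1, hp1])
    exact hq.mod_ne_zero hg hq0 (Nat.mod_eq_zero_of_dvd (Nat.modEq_zero_iff_dvd.1 this))
  subst hq0
  rw [add_zero] at hn2 hlow
  have hlead_ge' : g + 1 ≤ p / g ^ (k + 1) :=
    (Nat.le_div_iff_mul_le (by positivity)).2
      (by rw [add_mul, one_mul, ← pow_succ']; exact hlow)
  rw [hA, hp1, hn2] at hlead_ge'
  omega

end IsBasePalindrome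

def IsSumOfTwoPalindromes (g n : ℕ) : Prop :=
  ∃ p q : ℕ, IsBasePalindrome g p ∧ IsBasePalindrome g q ∧ n = p + q

theorem IsSumOfTwoPalindromes.mod_sq_ne_one {g k n : ℕ} (hg : 2 ≤ g)
    (hn : IsSumOfTwoPalindromes g n) (hlow : g ^ (k + 2) + g ^ (k + 1) ≤ n)
    (hhigh : n < g ^ (k + 2) + g ^ (k + 1) + g ^ k) : n % g ^ 2 ≠ 1 := by
  obtain ⟨p, q, hp, hq, rfl⟩ := hn
  rcases le_or_gt (g ^ (k + 2)) p with hpk | hpk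
  · exact hp.add_mod_sq_ne_one_of_le hg hq hpk hlow hhigh
  rcases le_or_gt (g ^ (k + 2)) q with hqk | hqk
  · rw [add_comm p q] at hlow hhigh ⊢
    exact hq.add_mod_sq_ne_one_of_le hg hp hqk hlow hhigh
  · exact hp.add_mod_sq_ne_one_of_lt hg hq hpk hqk hlow hhigh

/-- The `g ^ j` numbers `g ^ (j + 4) + g ^ (j + 3) + g ^ 2 * i + 1` with `i < g ^ j` are all
below `g ^ (j + 5)` and none of them is a sum of two palindromes. -/
theorem ncard_isSumOfTwoPalindromes_add_pow_le {g j N : ℕ} (hg : 2 ≤ g)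
    (hN : g ^ (j + 5) ≤ N) : {n | n < N ∧ IsSumOfTwoPalindromes g n}.ncard + g ^ j ≤ N := by
  set f : ℕ → ℕ := fun i => g ^ (j + 4) + g ^ (j + 3) + g ^ 2 * i + 1
  set B := (Finset.range (g ^ j)).image f
  have hf_lt {i : ℕ} (hi : i < g ^ j) : f i < g ^ (j + 4) + g ^ (j + 3) + g ^ (j + 2) := by
    have : g ^ 2 * (i + 1) ≤ g ^ 2 * g ^ j := Nat.mul_le_mul_left _ hi
    have : g ^ 2 * g ^ j = g ^ (j + 2) := by ring
    have : 1 < g ^ 2 := by nlinarith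
    simp only [f]; nlinarith
  have hB_card : B.card = g ^ j :=
    (Finset.card_image_of_injective _ fun i i' h => by
      simp only [f, add_left_inj, add_right_inj] at h
      exact Nat.eq_of_mul_eq_mul_left (by positivity) h).trans (Finset.card_range _)
  have hB_sub : B ⊆ Finset.range N := by
    simp only [B, Finset.image_subset_iff, Finset.mem_range]
    intro i hi
    have := hf_lt hi
    have : g ^ (j + 4) + g ^ (j + 3) + g ^ (j + 2) < g ^ (j + 5) :=
      pow_add_pow_add_pow_lt hg (j + 2)
    omega
  have hsums_sub : {n | n < N ∧ IsSumOfTwoPalindromes g n} ⊆ ↑(Finset.range N \ B) := by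
    rintro n ⟨hnN, hn⟩
    simp only [Finset.coe_sdiff, Set.mem_sdiff, Finset.mem_coe, Finset.mem_range, B,
      Finset.mem_image]
    refine ⟨hnN, ?_⟩
    rintro ⟨i, hi, rfl⟩
    refine hn.mod_sq_ne_one hg (k := j + 2)
      (show g ^ (j + 4) + g ^ (j + 3) ≤ f i by simp only [f]; omega) (hf_lt hi) ?_
    have : f i = g ^ 2 * (g ^ (j + 2) + g ^ (j + 1) + i) + 1 := by ring
    rw [this, Nat.mul_add_mod, Nat.mod_eq_of_lt (by nlinarith)]
  calc _ ≤ (Finset.range N \ B).card + B.card := by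
        rw [hB_card, ← Set.ncard_coe_finset]
        exact Nat.add_le_add_right (Set.ncard_le_ncard hsums_sub (Finset.finite_toSet _)) _
    _ = N := by rw [Finset.card_sdiff_add_card_eq_card hB_sub, Finset.card_range]

theorem ncard_isSumOfTwoPalindromes_mul_add_le {g N : ℕ} (hg : 2 ≤ g) (hN : g ^ 5 ≤ N) :
    {n | n < N ∧ IsSumOfTwoPalindromes g n}.ncard * g ^ 6 + N ≤ N * g ^ 6 := by
  have hN0 : N ≠ 0 := (lt_of_lt_of_le (by positivity) hN).ne'
  have hlog : 5 ≤ Nat.log g N := Nat.le_log_of_pow_le (by omega) hN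
  have hlow : g ^ (Nat.log g N - 5 + 5) ≤ N := by
    rw [Nat.sub_add_cancel hlog]; exact Nat.pow_log_le_self g hN0
  have hhigh : N < g ^ (Nat.log g N - 5) * g ^ 6 := by
    rw [← pow_add, show Nat.log g N - 5 + 6 = Nat.log g N + 1 by omega]
    exact Nat.lt_pow_succ_log_self (by omega) N
  have := Nat.mul_le_mul_right (g ^ 6) (ncard_isSumOfTwoPalindromes_add_pow_le hg hlow)
  rw [add_mul] at this
  omega

theorem ncard_isSumOfTwoPalindromes_le {g : ℕ} (hg : 2 ≤ g) {x : ℝ}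
    (hx : (g : ℝ) ^ 5 ≤ x) :
    ({n : ℕ | (n : ℝ) ≤ x ∧ IsSumOfTwoPalindromes g n}.ncard : ℝ) ≤
      (1 - 1 / (g : ℝ) ^ 6) * (x + 1) := by
  set N := ⌊x⌋₊ + 1
  have hNx : (N : ℝ) ≤ x + 1 := by
    simp only [N, Nat.cast_add, Nat.cast_one]
    linarith [Nat.floor_le ((pow_nonneg (Nat.cast_nonneg g) 5).trans hx)]
  have hN : g ^ 5 ≤ N := (Nat.le_floor (by exact_mod_cast hx)).trans (Nat.le_succ _)
  have hle : {n : ℕ | (n : ℝ) ≤ x ∧ IsSumOfTwoPalindromes g n}.ncard ≤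
      {n | n < N ∧ IsSumOfTwoPalindromes g n}.ncard :=
    Set.ncard_le_ncard (fun n ⟨hn, hsum⟩ => ⟨Nat.lt_succ_of_le (Nat.le_floor hn), hsum⟩)
      ((Set.finite_lt_nat N).subset fun n hn => hn.1)
  have hcount : ({n | n < N ∧ IsSumOfTwoPalindromes g n}.ncard : ℝ) * (g : ℝ) ^ 6 + N ≤
      N * (g : ℝ) ^ 6 := by
    exact_mod_cast ncard_isSumOfTwoPalindromes_mul_add_le hg hN
  have hG1 : (0 : ℝ) ≤ (g : ℝ) ^ 6 - 1 := by
    have : (1 : ℝ) ≤ (g : ℝ) ^ 6 := one_le_pow₀ (by exact_mod_cast (by omega : 1 ≤ g))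
    linarith
  have hrhs :
      (1 - 1 / (g : ℝ) ^ 6) * (x + 1) * (g : ℝ) ^ 6 = ((g : ℝ) ^ 6 - 1) * (x + 1) := by
    field_simp
  rw [← mul_le_mul_iff_of_pos_right (by positivity : (0 : ℝ) < (g : ℝ) ^ 6), hrhs]
  have hle' : (_ : ℝ) ≤ _ := Nat.cast_le.2 hle
  nlinarith [mul_le_mul_of_nonneg_left hNx hG1]

theorem sums_of_two_palindromes_not_full_density (g : ℕ) (hg : 3 ≤ g) :
    ∃ c : ℝ, c < 1 ∧ ∃ x₀ : ℝ, ∀ x : ℝ, x₀ ≤ x →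
      ((({n : ℕ | (n : ℝ) ≤ x ∧ ∃ p q : ℕ, IsBasePalindrome g p ∧ IsBasePalindrome g q ∧
        n = p + q}).ncard : ℝ)) ≤ c * x := by
  set G : ℝ := (g : ℝ) ^ 6
  have hG : 1 ≤ G := one_le_pow₀ (by exact_mod_cast (by omega : 1 ≤ g))
  refine ⟨1 - 1 / (2 * G), sub_lt_self 1 (by positivity), 2 * G, fun x hx => ?_⟩
  have hx5 : (g : ℝ) ^ 5 ≤ x := by
    have : (g : ℝ) ^ 5 ≤ G :=
      pow_le_pow_right₀ (by exact_mod_cast (by omega : 1 ≤ g)) (by norm_num)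
    linarith
  calc _ ≤ (1 - 1 / G) * (x + 1) := ncard_isSumOfTwoPalindromes_le (by omega) hx5
    _ ≤ (1 - 1 / (2 * G)) * x := by
      have hgap : (1 - 1 / (2 * G)) * x - (1 - 1 / G) * (x + 1) = (x + 2) / (2 * G) - 1 := by
        field_simp
        ring
      have : 1 ≤ (x + 2) / (2 * G) := (one_le_div (by positivity)).2 (by linarith)
      linarith
end

section
/- Let g ≥ 5. Every positive integer n with exactly two base g digits is a sum of two base g palindromes, except those of the form n = (δ+1)·g + δ with 1 ≤ δ ≤ g-2, which are a sum of three base g palindromes. -/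
lemma pal_small {g m : ℕ} (hg : 2 ≤ g) (hm : m < g) : IsBasePalindrome g m := by
  rcases Nat.eq_zero_or_pos m with h | h
  · simp [IsBasePalindrome, h]
  · unfold IsBasePalindrome
    rw [Nat.digits_def' hg h, Nat.mod_eq_of_lt hm, Nat.div_eq_of_lt hm]
    simp

lemma pal_rep {g c : ℕ} (hg : 2 ≤ g) (hc : 0 < c) (hcg : c < g) :
    IsBasePalindrome g (c * g + c) := by
  unfold IsBasePalindrome
  have h1 : 0 < c * g + c := by positivity
  have hmod : (c * g + c) % g = c := by
    rw [add_comm, Nat.add_mul_mod_self_right, Nat.mod_eq_of_lt hcg]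
  have hdiv : (c * g + c) / g = c := by
    rw [add_comm, Nat.add_mul_div_right _ _ (by omega : 0 < g),
      Nat.div_eq_of_lt hcg, zero_add]
  rw [Nat.digits_def' hg h1, hmod, hdiv, Nat.digits_def' hg hc,
    Nat.mod_eq_of_lt hcg, Nat.div_eq_of_lt hcg]
  simp

theorem two_digit_sums (g : ℕ) (hg : 5 ≤ g) (n : ℕ) (h1 : g ≤ n) (h2 : n ≤ g ^ 2 - 1) :
    ((¬ ∃ δ : ℕ, 1 ≤ δ ∧ δ ≤ g - 2 ∧ n = (δ + 1) * g + δ) →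
      ∃ p q : ℕ, IsBasePalindrome g p ∧ IsBasePalindrome g q ∧ n = p + q) ∧
    ((∃ δ : ℕ, 1 ≤ δ ∧ δ ≤ g - 2 ∧ n = (δ + 1) * g + δ) →
      ∃ p q r : ℕ, IsBasePalindrome g p ∧ IsBasePalindrome g q ∧ IsBasePalindrome g r ∧
        n = p + q + r) := by
  have hg2 : 2 ≤ g := by omega
  set a := n / g with ha
  set b := n % g with hb
  have hn : a * g + b = n := by rw [ha, hb, mul_comm]; exact Nat.div_add_mod n g
  have hblt : b < g := Nat.mod_lt n (by omega)
  have ha1 : 1 ≤ a := (Nat.one_le_div_iff (by omega)).mpr h1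
  have hag : a < g := by
    have hsq : g ^ 2 = g * g := sq g
    have : n < g * g := by omega
    exact Nat.div_lt_of_lt_mul this
  constructor
  · intro hno
    by_cases hab : a ≤ b
    · refine ⟨a * g + a, b - a, pal_rep hg2 (by omega) (by omega),
        pal_small hg2 (by omega), by omega⟩
    · by_cases hb1 : a = b + 1
      · have hb0 : b = 0 := by
          by_contra h
          apply hno
          refine ⟨b, by omega, by omega, ?_⟩
          rw [← hn, hb1]
        refine ⟨g - 1, 1, pal_small hg2 (by omega), pal_small hg2 (by omega), ?_⟩
        have : a * g = 1 * g := by rw [hb1, hb0]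
        omega
      · -- a ≥ b + 2
        have hkey : (a - 1) * g = a * g - g := by rw [Nat.sub_one_mul]
        have hga : g ≤ a * g := Nat.le_mul_of_pos_left g (by omega)
        refine ⟨(a - 1) * g + (a - 1), g + 1 + b - a,
          pal_rep hg2 (by omega) (by omega), pal_small hg2 (by omega), by omega⟩
  · rintro ⟨δ, hδ1, hδ2, hnδ⟩
    have hexp : (δ + 1) * g = δ * g + g := by ring
    refine ⟨δ * g + δ, g - 1, 1, pal_rep hg2 (by omega) (by omega),
      pal_small hg2 (by omega), pal_small hg2 (by omega), by omega⟩
end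

section
/- Let g ≥ 5. Every positive integer n with exactly three base g digits is a sum of two base g palindromes, except n = 2g² + 1, which is a sum of three base g palindromes. -/
lemma pal1 (g d : ℕ) (hd : d < g) : IsBasePalindrome g d := by
  unfold IsBasePalindrome
  rcases Nat.eq_zero_or_pos d with h | h
  · subst h; simp
  · rw [Nat.digits_def' (by omega : 1 < g) h, Nat.mod_eq_of_lt hd, Nat.div_eq_of_lt hd,
      Nat.digits_zero]
    simp

lemma pal2 (g z : ℕ) (hz : z < g) : IsBasePalindrome g (z * g + z) := by
  rcases Nat.eq_zero_or_pos z with h | h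
  · subst h; unfold IsBasePalindrome; simp
  have hg : 1 < g := by omega
  have h0 : 0 < z * g + z := by omega
  unfold IsBasePalindrome
  rw [Nat.digits_def' hg h0,
    show z * g + z = z + z * g by ring,
    Nat.add_mul_mod_self_right, Nat.mod_eq_of_lt hz,
    Nat.add_mul_div_right _ _ (by omega : 0 < g), Nat.div_eq_of_lt hz, zero_add,
    Nat.digits_def' hg h, Nat.mod_eq_of_lt hz, Nat.div_eq_of_lt hz, Nat.digits_zero]
  simp

lemma pal3 (g x y : ℕ) (hx1 : 1 ≤ x) (hxg : x < g) (hyg : y < g) :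
    IsBasePalindrome g (x * g ^ 2 + y * g + x) := by
  have hg : 1 < g := by omega
  have h0 : 0 < x * g ^ 2 + y * g + x := by omega
  have hxg0 : 0 < y + x * g := by nlinarith
  unfold IsBasePalindrome
  rw [Nat.digits_def' hg h0,
    show x * g ^ 2 + y * g + x = x + (y + x * g) * g by ring,
    Nat.add_mul_mod_self_right, Nat.mod_eq_of_lt hxg,
    Nat.add_mul_div_right _ _ (by omega : 0 < g), Nat.div_eq_of_lt hxg, zero_add,
    Nat.digits_def' hg hxg0,
    Nat.add_mul_mod_self_right, Nat.mod_eq_of_lt hyg,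
    Nat.add_mul_div_right _ _ (by omega : 0 < g), Nat.div_eq_of_lt hyg, zero_add,
    Nat.digits_def' hg (by omega : 0 < x), Nat.mod_eq_of_lt hxg, Nat.div_eq_of_lt hxg,
    Nat.digits_zero]
  simp

theorem three_digit_sums (g : ℕ) (hg : 5 ≤ g) (n : ℕ) (h1 : g ^ 2 ≤ n) (h2 : n ≤ g ^ 3 - 1) :
    (n ≠ 2 * g ^ 2 + 1 →
      ∃ p q : ℕ, IsBasePalindrome g p ∧ IsBasePalindrome g q ∧ n = p + q) ∧
    (n = 2 * g ^ 2 + 1 →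
      ∃ p q r : ℕ, IsBasePalindrome g p ∧ IsBasePalindrome g q ∧ IsBasePalindrome g r ∧
        n = p + q + r) := by
  have hgpos : 0 < g := by omega
  obtain ⟨a, b, c, hc, hb, ha1, ha2, hn⟩ :
      ∃ a b c, c < g ∧ b < g ∧ 1 ≤ a ∧ a < g ∧ n = a * g ^ 2 + b * g + c := by
    refine ⟨n / g / g, n / g % g, n % g, Nat.mod_lt _ hgpos, Nat.mod_lt _ hgpos, ?_, ?_, ?_⟩
    · rw [Nat.div_div_eq_div_mul, Nat.one_le_div_iff (by positivity)]
      calc g * g = g ^ 2 := by ring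
        _ ≤ n := h1
    · rw [Nat.div_div_eq_div_mul, Nat.div_lt_iff_lt_mul (by positivity)]
      have h3 : 0 < g ^ 3 := by positivity
      calc n ≤ g ^ 3 - 1 := h2
        _ < g ^ 3 := by omega
        _ = g * (g * g) := by ring
    · have hd1 := Nat.div_add_mod n g
      have hd2 := Nat.div_add_mod (n / g) g
      calc n = g * (n / g) + n % g := hd1.symm
        _ = g * (g * (n / g / g) + n / g % g) + n % g := by rw [hd2]
        _ = (n / g / g) * g ^ 2 + (n / g % g) * g + n % g := by ring
  constructor
  · intro hne
    rcases le_or_gt a c with hac | hac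
    · -- c ≥ a : p = [a,b,a], q = c - a
      obtain ⟨d, hd⟩ := Nat.exists_eq_add_of_le hac
      exact ⟨a * g ^ 2 + b * g + a, d, pal3 g a b ha1 ha2 hb, pal1 g d (by omega),
        by rw [hn, hd]; ring⟩
    · rcases eq_or_lt_of_le (show c + 1 ≤ a by omega) with hca | hca
      · -- a = c + 1
        subst hca
        rcases Nat.eq_zero_or_pos b with hb0 | hb1
        · subst hb0
          obtain ⟨m, rfl⟩ : ∃ m, g = m + 5 := ⟨g - 5, by omega⟩
          rcases c with _ | _ | c2
          · -- n = g^2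
            exact ⟨(m + 4) * (m + 5) + (m + 4), 1, pal2 _ _ (by omega), pal1 _ 1 (by omega),
              by rw [hn]; ring⟩
          · -- n = 2g^2 + 1 : contradiction
            exact absurd (by rw [hn]; ring) hne
          · -- a = c2 + 3 ≥ 3
            refine ⟨1 * (m + 5) ^ 2 + 1 * (m + 5) + 1,
              (c2 + 1) * (m + 5) ^ 2 + (m + 4) * (m + 5) + (c2 + 1),
              pal3 _ 1 1 (by omega) (by omega) (by omega),
              pal3 _ (c2 + 1) (m + 4) (by omega) (by omega) (by omega),
              by rw [hn]; ring⟩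
        · -- b ≥ 1
          obtain ⟨b', rfl⟩ : ∃ b', b = b' + 1 := ⟨b - 1, by omega⟩
          obtain ⟨m, rfl⟩ : ∃ m, g = m + 5 := ⟨g - 5, by omega⟩
          exact ⟨(c + 1) * (m + 5) ^ 2 + b' * (m + 5) + (c + 1), m + 4,
            pal3 _ (c + 1) b' (by omega) (by omega) (by omega), pal1 _ (m + 4) (by omega),
            by rw [hn]; ring⟩
      · -- c + 2 ≤ a
        obtain ⟨e, rfl⟩ : ∃ e, a = c + 2 + e := ⟨a - (c + 2), by omega⟩
        rcases le_or_gt (b + e + 1) g with h | h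
        · obtain ⟨f, rfl⟩ : ∃ f, g = b + e + 1 + f := ⟨g - (b + e + 1), by omega⟩
          exact ⟨(c + 1 + e) * (b + e + 1 + f) ^ 2 + (b + e) * (b + e + 1 + f) + (c + 1 + e),
            (b + f) * (b + e + 1 + f) + (b + f),
            pal3 _ (c + 1 + e) (b + e) (by omega) (by omega) (by omega),
            pal2 _ (b + f) (by omega),
            by rw [hn]; ring⟩
        · obtain ⟨w, rfl⟩ : ∃ w, g = e + 3 + w := ⟨g - (e + 3), by omega⟩
          obtain ⟨f, rfl⟩ : ∃ f, b = f + w + 3 := ⟨b - (w + 3), by omega⟩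
          exact ⟨(c + 2 + e) * (e + 3 + w) ^ 2 + (f + 1) * (e + 3 + w) + (c + 2 + e),
            (w + 1) * (e + 3 + w) + (w + 1),
            pal3 _ (c + 2 + e) (f + 1) (by omega) (by omega) (by omega),
            pal2 _ (w + 1) (by omega),
            by rw [hn]; ring⟩
  · intro heq
    obtain ⟨m, rfl⟩ : ∃ m, g = m + 5 := ⟨g - 5, by omega⟩
    exact ⟨(m + 4) * (m + 5) + (m + 4), (m + 4) * (m + 5) + (m + 4), 3,
      pal2 _ _ (by omega), pal2 _ _ (by omega), pal1 _ 3 (by omega),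
      by rw [heq]; ring⟩
end

section
/- Let g ≥ 5. Every positive integer with exactly four base g digits is a sum of three base g palindromes. -/
lemma digits_cons (g x k : ℕ) (hg : 1 < g) (hx : x < g) (hk : 0 < k) :
    Nat.digits g (x + g * k) = x :: Nat.digits g k := by
  have hpos : 0 < x + g * k :=
    Nat.lt_of_lt_of_le (Nat.mul_pos (by omega) hk) (Nat.le_add_left _ _)
  rw [Nat.digits_def' hg hpos]
  congr 1
  · rw [Nat.add_mul_mod_self_left, Nat.mod_eq_of_lt hx]
  · rw [Nat.add_mul_div_left _ _ (by omega : 0 < g), Nat.div_eq_of_lt hx, Nat.zero_add]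

lemma pal_zero (g : ℕ) : IsBasePalindrome g 0 := by simp [IsBasePalindrome]

lemma pal_single (g x : ℕ) (hg : 1 < g) (hx : x < g) : IsBasePalindrome g x := by
  rcases Nat.eq_zero_or_pos x with rfl | hx0
  · simp [IsBasePalindrome]
  · unfold IsBasePalindrome
    rw [Nat.digits_of_lt g x (by omega) hx]
    rfl

lemma pal_two (g x : ℕ) (hg : 1 < g) (hx : x < g) : IsBasePalindrome g (x * g + x) := by
  rcases Nat.eq_zero_or_pos x with rfl | hx0
  · simp [IsBasePalindrome]
  · unfold IsBasePalindrome
    rw [show x * g + x = x + g * x by ring, digits_cons g x x hg hx hx0,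
      Nat.digits_of_lt g x (by omega) hx]
    rfl

lemma pal_three (g x y : ℕ) (hg : 1 < g) (hx0 : 0 < x) (hx : x < g) (hy : y < g) :
    IsBasePalindrome g (x * g ^ 2 + y * g + x) := by
  unfold IsBasePalindrome
  have h1 : 0 < y + g * x :=
    Nat.lt_of_lt_of_le (Nat.mul_pos (by omega) hx0) (Nat.le_add_left _ _)
  rw [show x * g ^ 2 + y * g + x = x + g * (y + g * x) by ring,
    digits_cons g x _ hg hx h1, digits_cons g y x hg hy hx0,
    Nat.digits_of_lt g x (by omega) hx]
  rfl

lemma pal_four (g x y : ℕ) (hg : 1 < g) (hx0 : 0 < x) (hx : x < g) (hy : y < g) :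
    IsBasePalindrome g (x * g ^ 3 + y * g ^ 2 + y * g + x) := by
  unfold IsBasePalindrome
  have h2 : 0 < y + g * x :=
    Nat.lt_of_lt_of_le (Nat.mul_pos (by omega) hx0) (Nat.le_add_left _ _)
  have h1 : 0 < y + g * (y + g * x) :=
    Nat.lt_of_lt_of_le (Nat.mul_pos (by omega) h2) (Nat.le_add_left _ _)
  rw [show x * g ^ 3 + y * g ^ 2 + y * g + x = x + g * (y + g * (y + g * x)) by ring,
    digits_cons g x _ hg hx h1, digits_cons g y _ hg hy h2,
    digits_cons g y x hg hy hx0, Nat.digits_of_lt g x (by omega) hx]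
  rfl

theorem four_digit_sum_three_palindromes (g : ℕ) (hg : 5 ≤ g) (n : ℕ)
    (h1 : g ^ 3 ≤ n) (h2 : n ≤ g ^ 4 - 1) :
    ∃ p q r : ℕ, IsBasePalindrome g p ∧ IsBasePalindrome g q ∧ IsBasePalindrome g r ∧
      n = p + q + r := by
  have hg1 : 1 < g := by omega
  have hg0 : 0 < g := by omega
  have hG3 : 0 < g ^ 3 := by positivity
  have hG4 : 0 < g ^ 4 := by positivity
  have hn4 : n < g ^ 4 := lt_of_le_of_lt h2 (Nat.sub_lt hG4 (by norm_num))
  obtain ⟨w4, hw4⟩ : ∃ w4, w4 + 1 = g := ⟨g - 1, by omega⟩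
  obtain ⟨w3, hw3⟩ : ∃ w3, w3 + 2 = g := ⟨g - 2, by omega⟩
  obtain ⟨a, s, H1, hs3, ha1, hag⟩ :
      ∃ a s, g ^ 3 * a + s = n ∧ s < g ^ 3 ∧ 1 ≤ a ∧ a < g := by
    refine ⟨n / g ^ 3, n % g ^ 3, Nat.div_add_mod n (g ^ 3), Nat.mod_lt _ hG3,
      (Nat.one_le_div_iff hG3).2 h1, ?_⟩
    apply (Nat.div_lt_iff_lt_mul hG3).2
    calc n < g ^ 4 := hn4
      _ = g * g ^ 3 := by ring
  by_cases hsa : s < a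
  · -- "negative" case: n = a*g^3 + s with s < a
    by_cases ha' : a = 1
    · have hs0 : s = 0 := by omega
      have hng : n = g ^ 3 := by rw [← H1, ha', hs0]; ring
      refine ⟨w4 * g ^ 2 + 0 * g + w4, w3 * g + w3, 3,
        pal_three g w4 0 hg1 (by omega) (by omega) (by omega),
        pal_two g w3 hg1 (by omega),
        pal_single g 3 hg1 (by omega), ?_⟩
      have hw34 : w3 + 1 = w4 := by omega
      rw [hng, ← hw4, ← hw34]; ring
    · obtain ⟨a2, ha2⟩ : ∃ a2, a = a2 + 2 := ⟨a - 2, by omega⟩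
      obtain ⟨m, hm⟩ : ∃ m, m + a = s + g + 1 := ⟨s + g + 1 - a, by omega⟩
      by_cases hmg' : m = g
      · have hs' : s = a2 + 1 := by omega
        refine ⟨(a2 + 1) * g ^ 3 + w4 * g ^ 2 + w4 * g + (a2 + 1), w4, 1,
          pal_four g (a2 + 1) w4 hg1 (by omega) (by omega) (by omega),
          pal_single g w4 hg1 (by omega),
          pal_single g 1 hg1 (by omega), ?_⟩
        rw [← H1, ha2, hs', ← hw4]; ring
      · have hmg : m ≤ g := by omega
        obtain ⟨v, hv⟩ : ∃ v, a2 = s + v := ⟨a2 - s, by omega⟩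
        have hmv : m + v = w4 := by omega
        refine ⟨(a2 + 1) * g ^ 3 + w4 * g ^ 2 + w4 * g + (a2 + 1), m, 0,
          pal_four g (a2 + 1) w4 hg1 (by omega) (by omega) (by omega),
          pal_single g m hg1 (by omega),
          pal_zero g, ?_⟩
        rw [← H1, ha2, hv, ← hw4, ← hmv]; ring
  · -- main case
    obtain ⟨t, ht⟩ : ∃ t, s = t + a := ⟨s - a, by omega⟩
    obtain ⟨b, m, H3, hmlt, hbg⟩ :
        ∃ b m, (g ^ 2 + g) * b + m = t ∧ m < g ^ 2 + g ∧ b < g := by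
      refine ⟨t / (g ^ 2 + g), t % (g ^ 2 + g), Nat.div_add_mod t (g ^ 2 + g),
        Nat.mod_lt _ (by positivity), ?_⟩
      apply (Nat.div_lt_iff_lt_mul (by positivity)).2
      have ht3 : t < g ^ 3 := by
        calc t ≤ s := by omega
          _ < g ^ 3 := hs3
      calc t < g ^ 3 := ht3
        _ ≤ g ^ 3 + g ^ 2 := Nat.le_add_right _ _
        _ = g * (g ^ 2 + g) := by ring
    obtain ⟨c, c', H4, hc'g, hcg⟩ :
        ∃ c c', g * c + c' = m ∧ c' < g ∧ c ≤ g := by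
      refine ⟨m / g, m % g, Nat.div_add_mod m g, Nat.mod_lt _ hg0, ?_⟩
      have hlt : m / g < g + 1 := by
        apply (Nat.div_lt_iff_lt_mul hg0).2
        calc m < g ^ 2 + g := hmlt
          _ = (g + 1) * g := by ring
      omega
    have hn : n = g ^ 3 * a + a + (g ^ 2 + g) * b + (g * c + c') := by
      rw [← H1, ht, ← H3, ← H4]; ring
    by_cases hc0 : c = 0
    · refine ⟨a * g ^ 3 + b * g ^ 2 + b * g + a, c', 0,
        pal_four g a b hg1 (by omega) hag hbg,
        pal_single g c' hg1 hc'g, pal_zero g, ?_⟩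
      rw [hn, hc0]; ring
    · by_cases hcg' : c = g
      · by_cases hc'0 : c' = 0
        · refine ⟨a * g ^ 3 + b * g ^ 2 + b * g + a, w4 * g + w4, 1,
            pal_four g a b hg1 (by omega) hag hbg,
            pal_two g w4 hg1 (by omega),
            pal_single g 1 hg1 (by omega), ?_⟩
          rw [hn, hcg', hc'0, ← hw4]; ring
        · obtain ⟨e, he⟩ : ∃ e, c' = e + 1 := ⟨c' - 1, by omega⟩
          refine ⟨a * g ^ 3 + b * g ^ 2 + b * g + a, 1 * g ^ 2 + 0 * g + 1, e,
            pal_four g a b hg1 (by omega) hag hbg,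
            pal_three g 1 0 hg1 (by omega) (by omega) (by omega),
            pal_single g e hg1 (by omega), ?_⟩
          rw [hn, hcg', he]; ring
      · have hc1g : c < g := by omega
        obtain ⟨c1, hc1⟩ : ∃ c1, c = c1 + 1 := ⟨c - 1, by omega⟩
        rcases le_or_gt c c' with hle | hlt
        · obtain ⟨e, he⟩ : ∃ e, c' = c + e := ⟨c' - c, by omega⟩
          refine ⟨a * g ^ 3 + b * g ^ 2 + b * g + a, c * g + c, e,
            pal_four g a b hg1 (by omega) hag hbg,
            pal_two g c hg1 hc1g,
            pal_single g e hg1 (by omega), ?_⟩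
          rw [hn, he]; ring
        · by_cases hexc : c' + 1 = c
          · by_cases hcone : c = 1
            · have hc'0 : c' = 0 := by omega
              refine ⟨a * g ^ 3 + b * g ^ 2 + b * g + a, w4, 1,
                pal_four g a b hg1 (by omega) hag hbg,
                pal_single g w4 hg1 (by omega),
                pal_single g 1 hg1 (by omega), ?_⟩
              rw [hn, hcone, hc'0, ← hw4]; ring
            · obtain ⟨c2, hc2⟩ : ∃ c2, c = c2 + 2 := ⟨c - 2, by omega⟩
              have hc'2 : c' = c2 + 1 := by omega
              by_cases hb0 : b = 0
              · by_cases haone : a = 1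
                · refine ⟨w4 * g ^ 2 + (c2 + 1) * g + w4, 1 * g ^ 2 + 0 * g + 1, c2 + 2,
                    pal_three g w4 (c2 + 1) hg1 (by omega) (by omega) (by omega),
                    pal_three g 1 0 hg1 (by omega) (by omega) (by omega),
                    pal_single g (c2 + 2) hg1 (by omega), ?_⟩
                  rw [hn, haone, hb0, hc2, hc'2, ← hw4]; ring
                · obtain ⟨a2, ha2'⟩ : ∃ a2, a = a2 + 2 := ⟨a - 2, by omega⟩
                  refine ⟨(a2 + 1) * g ^ 3 + w3 * g ^ 2 + w3 * g + (a2 + 1),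
                      1 * g ^ 2 + 3 * g + 1, (c2 + 1) * g + (c2 + 1),
                    pal_four g (a2 + 1) w3 hg1 (by omega) (by omega) (by omega),
                    pal_three g 1 3 hg1 (by omega) (by omega) (by omega),
                    pal_two g (c2 + 1) hg1 (by omega), ?_⟩
                  rw [hn, ha2', hb0, hc2, hc'2, ← hw3]; ring
              · obtain ⟨b1, hb1⟩ : ∃ b1, b = b1 + 1 := ⟨b - 1, by omega⟩
                refine ⟨a * g ^ 3 + b1 * g ^ 2 + b1 * g + a, 1 * g ^ 2 + 3 * g + 1, c2 * g + c2,
                  pal_four g a b1 hg1 (by omega) hag (by omega),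
                  pal_three g 1 3 hg1 (by omega) (by omega) (by omega),
                  pal_two g c2 hg1 (by omega), ?_⟩
                rw [hn, hb1, hc2, hc'2]; ring
          · obtain ⟨u, hu⟩ : ∃ u, c1 = c' + u := ⟨c1 - c', by omega⟩
            obtain ⟨e, hue⟩ : ∃ e, e + u = g := ⟨g - u, by omega⟩
            have he2 : 2 ≤ e := by omega
            have heg : e < g := by omega
            refine ⟨a * g ^ 3 + b * g ^ 2 + b * g + a, c1 * g + c1, e,
              pal_four g a b hg1 (by omega) hag hbg,
              pal_two g c1 hg1 (by omega),
              pal_single g e hg1 (by omega), ?_⟩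
            rw [hn, hc1, hu, ← hue]; ring
end

section
/- Let g ≥ 3. The number 2g² + 1 is not a sum of two base g palindromes. -/
namespace IsBasePalindrome

variable {g n : ℕ}

theorem not_dvd (hg : 1 < g) (hn : n ≠ 0) (hpal : IsBasePalindrome g n) : ¬ g ∣ n := by
  intro hdvd
  have hfirst : (Nat.digits g n).head? = some 0 := by
    rw [Nat.digits_def' hg (Nat.pos_of_ne_zero hn), Nat.mod_eq_zero_of_dvd hdvd]; rfl
  rw [hpal, List.head?_reverse, List.getLast?_eq_some_getLast (Nat.digits_ne_nil_iff_ne_zero.2 hn),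
    Option.some_inj] at hfirst
  exact Nat.getLast_digit_ne_zero g hn hfirst

theorem exists_eq_of_three_digits (hg : 1 < g) (hlo : g ^ 2 ≤ n) (hhi : n < g ^ 3)
    (hpal : IsBasePalindrome g n) : ∃ a b, 0 < a ∧ b < g ∧ n = a + b * g + a * g ^ 2 := by
  have hn : n ≠ 0 := ((pow_pos (by omega) 2).trans_le hlo).ne'
  have hlen : (Nat.digits g n).length = 3 := by
    rw [Nat.length_digits g n hg hn, Nat.log_eq_of_pow_le_of_lt_pow hlo hhi]
  obtain ⟨a, b, c, hdigits⟩ := List.length_eq_three.1 hlen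
  have hac : a = c := by simpa [hdigits] using congrArg List.head? hpal
  refine ⟨a, b, ?_, ?_, ?_⟩
  · have hlead : c ≠ 0 := by simpa [hdigits] using Nat.getLast_digit_ne_zero g hn
    omega
  · exact Nat.digits_lt_base (m := n) hg (by simp [hdigits])
  · rw [← Nat.ofDigits_digits g n, hdigits]
    simp only [Nat.ofDigits_cons, Nat.ofDigits_nil, hac]
    ring

theorem add_ne_two_mul_sq_add_one {p q : ℕ} (hg : 3 ≤ g) (hp : IsBasePalindrome g p)
    (hq : IsBasePalindrome g q) (hq_big : g ^ 2 < q) : p + q ≠ 2 * g ^ 2 + 1 := by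
  intro hsum
  have hq_lt : q < g ^ 3 := by nlinarith
  obtain ⟨a, b, ha, hb, rfl⟩ := hq.exists_eq_of_three_digits (by omega) hq_big.le hq_lt
  have ha_one : a = 1 := by nlinarith
  subst ha_one
  have hp_add : p + g * b = g ^ 2 := by linarith
  have hp_dvd : g ∣ p :=
    (Nat.dvd_add_left (dvd_mul_right g b)).mp (hp_add ▸ dvd_pow_self g two_ne_zero)
  have hp_ne : p ≠ 0 := by
    rintro rfl
    nlinarith
  exact hp.not_dvd (by omega) hp_ne hp_dvd

end IsBasePalindrome

theorem two_g_sq_plus_one_not_sum_two (g : ℕ) (hg : 3 ≤ g) :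
    ¬ ∃ p q : ℕ, IsBasePalindrome g p ∧ IsBasePalindrome g q ∧ 2 * g ^ 2 + 1 = p + q := by
  rintro ⟨p, q, hp, hq, hsum⟩
  rcases lt_or_ge (g ^ 2) q with hq_big | hq_small
  · exact hp.add_ne_two_mul_sq_add_one hg hq hq_big hsum.symm
  · exact hq.add_ne_two_mul_sq_add_one hg hp (by omega) (by omega)
end

section
/- Let g ≥ 5 and δ with 1 ≤ δ ≤ g-2. The two-digit number (δ+1)·g + δ is not a sum of two base g palindromes. -/
lemma pal_form (g p : ℕ) (hg : 5 ≤ g) (hp : IsBasePalindrome g p) (hlt : p < g * g) :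
    p < g ∨ ∃ a, 1 ≤ a ∧ a < g ∧ p = a * (g + 1) := by
  by_cases h : p < g
  · exact Or.inl h
  · right
    push_neg at h
    have hg2 : 2 ≤ g := by omega
    have hp0 : 0 < p := by omega
    have hq0 : 0 < p / g := Nat.div_pos h (by omega)
    have hqg : p / g < g := (Nat.div_lt_iff_lt_mul (by omega)).2 hlt
    have hd2 : Nat.digits g (p / g) = [p / g] := by
      rw [Nat.digits_def' hg2 hq0, Nat.mod_eq_of_lt hqg, Nat.div_eq_of_lt hqg,
        Nat.digits_zero]
    have hd1 : Nat.digits g p = [p % g, p / g] := by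
      rw [Nat.digits_def' hg2 hp0, hd2]
    have hpal := hp
    unfold IsBasePalindrome at hpal
    rw [hd1] at hpal
    simp at hpal
    have hmd : p % g = p / g := hpal.1
    refine ⟨p / g, hq0, hqg, ?_⟩
    have hdm := Nat.div_add_mod p g
    rw [hmd] at hdm
    nlinarith [hdm]

theorem succ_delta_delta_not_sum_two (g δ : ℕ) (hg : 5 ≤ g) (h1 : 1 ≤ δ) (h2 : δ ≤ g - 2) :
    ¬ ∃ p q : ℕ, IsBasePalindrome g p ∧ IsBasePalindrome g q ∧
      (δ + 1) * g + δ = p + q := by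
  rintro ⟨p, q, hp, hq, heq⟩
  have hδg : δ + 2 ≤ g := by omega
  have hlt : (δ + 1) * g + δ < g * g := by
    have h3 : (δ + 2) * g ≤ g * g := Nat.mul_le_mul_right g hδg
    nlinarith
  have hpl : p < g * g := by omega
  have hql : q < g * g := by omega
  have hmod : ((δ + 1) * g + δ) % (g + 1) = g := by
    have e : (δ + 1) * g + δ = δ * (g + 1) + g := by ring
    rw [e, add_comm, Nat.add_mul_mod_self_right, Nat.mod_eq_of_lt (by omega)]
  rcases pal_form g p hg hp hpl with h | ⟨a, ha1, ha2, rfl⟩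
  · rcases pal_form g q hg hq hql with h' | ⟨b, hb1, hb2, rfl⟩
    · have hk : g ≤ δ * g := Nat.le_mul_of_pos_left g (by omega)
      have e : (δ + 1) * g = δ * g + g := by ring
      rw [e] at heq
      linarith
    · rw [heq] at hmod
      rw [add_comm, add_comm (b * (g + 1)) p, Nat.add_mul_mod_self_right, Nat.mod_eq_of_lt (by omega)] at hmod
      omega
  · rcases pal_form g q hg hq hql with h' | ⟨b, hb1, hb2, rfl⟩
    · rw [heq, add_comm (a * (g + 1)) q, Nat.add_mul_mod_self_right, Nat.mod_eq_of_lt (by omega)] at hmod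
      omega
    · have e : a * (g + 1) + b * (g + 1) = (a + b) * (g + 1) := by ring
      rw [heq, e] at hmod
      rw [Nat.mul_mod_left] at hmod
      omega
end

section
/- Let g ≥ 3. Any n of the form n = (g-1)·g^{l-1} + (g-1)·g^{l-2} + m·g² + 0·g + (g-1) with l ≥ 4 and 0 ≤ m < g^{l-4} cannot be written as p + q with p, q base g palindromes, and hence the lower density of sums of two base g palindromes is at most 1 - g^{-4}. -/
lemma digit_eq {b : ℕ} (hb : 2 ≤ b) : ∀ (i n : ℕ), (Nat.digits b n).getD i 0 = n / b ^ i % b := by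
  intro i
  induction i with
  | zero =>
    intro n
    rcases Nat.eq_zero_or_pos n with rfl | hn
    · simp
    · rw [Nat.digits_def' (by omega : 1 < b) hn]; simp
  | succ i ih =>
    intro n
    rcases Nat.eq_zero_or_pos n with rfl | hn
    · simp
    · rw [Nat.digits_def' (by omega : 1 < b) hn]
      simp only [List.getD_cons_succ, ih (n / b), Nat.div_div_eq_div_mul, pow_succ']

lemma pal_digit {g n : ℕ} (hg : 2 ≤ g) (h : IsBasePalindrome g n) {i L : ℕ}
    (hlen : (Nat.digits g n).length = L) (hi : i < L) :
    n / g ^ i % g = n / g ^ (L - 1 - i) % g := by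
  have h1 : (Nat.digits g n).getD i 0 = (Nat.digits g n).getD (L - 1 - i) 0 := by
    conv_lhs => rw [h]
    rw [List.getD_eq_getElem?_getD, List.getD_eq_getElem?_getD, List.getElem?_reverse (by omega)]
    congr 2
    omega
  rw [digit_eq hg, digit_eq hg] at h1
  exact h1

lemma pal_zero_s18 {g q : ℕ} (hg : 2 ≤ g) (h : IsBasePalindrome g q) (h0 : q % g = 0) : q = 0 := by
  by_contra hq
  have hne : Nat.digits g q ≠ [] := Nat.digits_ne_nil_iff_ne_zero.mpr hq
  have hlast := Nat.getLast_digit_ne_zero g hq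
  have hhead : (Nat.digits g q).getD 0 0 = 0 := by rw [digit_eq hg]; simpa using h0
  have hl : 0 < (Nat.digits g q).length := List.length_pos_iff_ne_nil.mpr hne
  have : (Nat.digits g q).getLast hne = (Nat.digits g q).getD 0 0 := by
    rw [List.getD_eq_getElem?_getD]
    conv_rhs => rw [h]
    rw [List.getElem?_reverse (by omega)]
    rw [List.getLast_eq_getElem]
    rw [List.getElem?_eq_getElem (by omega)]
    simp
  rw [hhead] at this
  exact hlast this

lemma upb (x y : ℕ) (hy : 0 < y) : x < (x/y+1)*y :=
  (Nat.div_lt_iff_lt_mul hy).mp (Nat.lt_succ_self _)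

set_option maxHeartbeats 1000000 in
set_option maxHeartbeats 1000000 in
lemma key (g k m p q : ℕ) (hg : 3 ≤ g) (hm : m < g ^ k) (hqp : q ≤ p)
    (hp : IsBasePalindrome g p) (hq : IsBasePalindrome g q)
    (hn : (g-1) * g^(k+3) + (g-1) * g^(k+2) + m * g^2 + (g-1) = p + q) : False := by
  have hg2 : 2 ≤ g := by omega
  set cg := g - 1 with hcgdef
  have hcg : cg + 1 = g := by omega
  have hcg2 : 2 ≤ cg := by omega
  set Y0 := g ^ k with hY0def
  set Y1 := g ^ (k+1) with hY1def
  set Y := g ^ (k+2) with hYdef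
  set W := g ^ (k+3) with hWdef
  have eW : W = Y * g := by rw [hWdef, hYdef, pow_succ]
  have eY : Y = Y1 * g := by rw [hYdef, hY1def, pow_succ]
  have eY1 : Y1 = Y0 * g := by rw [hY1def, hY0def, pow_succ]
  have e2 : g ^ 2 = g * g := by ring
  have hYpos : 0 < Y := by positivity
  have hWpos : 0 < W := by positivity
  clear_value cg Y0 Y1 Y W
  have hgg : cg < g * g := by nlinarith
  rw [e2] at hn
  have hs2Y : m * (g*g) + g * g ≤ Y := by
    calc m * (g*g) + g*g = (m+1) * (g*g) := by ring
    _ ≤ Y0 * (g*g) := Nat.mul_le_mul_right _ (by omega)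
    _ = Y := by rw [eY, eY1]; ring
  have hs2 : m * (g*g) + cg < Y := by nlinarith
  have hr_lt : cg * Y + m * (g*g) + cg < W := by
    rw [eW]
    have h1 : cg * Y + Y = (cg+1) * Y := by ring
    have h2 : (cg+1) * Y = Y * g := by rw [hcg, mul_comm]
    linarith
  -- mod facts for n
  have hng : (p + q) % g = cg := by
    rw [← hn, show cg * W + cg * Y + m * (g*g) + cg = cg + (cg*Y + cg*Y1 + m*g)*g by
      rw [eW, eY]; ring, Nat.add_mul_mod_self_right, Nat.mod_eq_of_lt (by omega)]
  have hng2 : (p + q) % (g*g) = cg := by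
    rw [← hn, show cg * W + cg * Y + m * (g*g) + cg = cg + (cg*Y1 + cg*Y0 + m)*(g*g) by
      rw [eW, eY, eY1]; ring, Nat.add_mul_mod_self_right, Nat.mod_eq_of_lt hgg]
  -- p has k+4 digits
  have hpW : W ≤ p := by
    have h2 : cg * W ≤ p + q := by
      rw [← hn]; linarith [Nat.zero_le (cg*Y), Nat.zero_le (m*(g*g)), Nat.zero_le cg]
    have h3 : 2 * W ≤ cg * W := Nat.mul_le_mul_right _ hcg2
    omega
  have hpn : p ≤ p + q := by omega
  have hnlt : p + q < W * g := by
    rw [← hn]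
    calc cg * W + cg * Y + m*(g*g) + cg < cg * W + W := by linarith
    _ = (cg + 1) * W := by ring
    _ = W * g := by rw [hcg, mul_comm]
  have hplt : p < W * g := by omega
  have hp0 : p ≠ 0 := by omega
  have hlenp : (Nat.digits g p).length = k + 4 := by
    rw [Nat.digits_len g p (by omega) hp0, Nat.log_eq_of_pow_le_of_lt_pow (by rwa [← hWdef])
      (by rw [show k+3+1 = k+4 from rfl, show g^(k+4) = W * g by rw [hWdef, pow_succ]]; exact hplt)]
  set a := p / W with hadef
  clear_value a
  have ha_low : a * W ≤ p := by rw [hadef]; exact Nat.div_mul_le_self p W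
  have ha_high : p < (a+1) * W := by rw [hadef]; exact upb p W hWpos
  have ha_lt : a < g := by rw [hadef]; exact (Nat.div_lt_iff_lt_mul hWpos).mpr (by rwa [mul_comm])
  have pa : p % g = a := by
    have h0 := pal_digit hg2 hp hlenp (i := 0) (by omega)
    rw [show k + 4 - 1 - 0 = k + 3 from rfl, pow_zero, Nat.div_one, ← hWdef, ← hadef] at h0
    rw [h0, Nat.mod_eq_of_lt ha_lt]
  set c := p / Y % g with hcdef
  have pc : p / g % g = c := by
    have h1 := pal_digit hg2 hp hlenp (i := 1) (by omega)
    rw [show k + 4 - 1 - 1 = k + 2 from rfl, pow_one, ← hYdef, ← hcdef] at h1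
    exact h1
  have hc_lt : c < g := Nat.mod_lt _ (by omega)
  have hpmod2 : p % (g*g) = a + g * c := by
    rw [Nat.mod_mul, pa, pc]
  have hPdiv : p % W / Y = c := by
    rw [eW, Nat.mod_mul_right_div_self, hcdef]
  clear_value c
  by_cases hqW : W ≤ q
  -- Case A
  · have hq0 : q ≠ 0 := by omega
    have hqlt : q < W * g := by omega
    have hlenq : (Nat.digits g q).length = k + 4 := by
      rw [Nat.digits_len g q (by omega) hq0, Nat.log_eq_of_pow_le_of_lt_pow (by rwa [← hWdef])
        (by rw [show k+3+1 = k+4 from rfl, show g^(k+4) = W * g by rw [hWdef, pow_succ]]; exact hqlt)]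
    set b := q / W with hbdef
    clear_value b
    have hb_low : b * W ≤ q := by rw [hbdef]; exact Nat.div_mul_le_self q W
    have hb_high : q < (b+1) * W := by rw [hbdef]; exact upb q W hWpos
    have hb_lt : b < g := by rw [hbdef]; exact (Nat.div_lt_iff_lt_mul hWpos).mpr (by rwa [mul_comm])
    have qb : q % g = b := by
      have h0 := pal_digit hg2 hq hlenq (i := 0) (by omega)
      rw [show k + 4 - 1 - 0 = k + 3 from rfl, pow_zero, Nat.div_one, ← hWdef, ← hbdef] at h0
      rw [h0, Nat.mod_eq_of_lt hb_lt]
    set d := q / Y % g with hddef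
    have qd : q / g % g = d := by
      have h1 := pal_digit hg2 hq hlenq (i := 1) (by omega)
      rw [show k + 4 - 1 - 1 = k + 2 from rfl, pow_one, ← hYdef, ← hddef] at h1
      exact h1
    have hd_lt : d < g := Nat.mod_lt _ (by omega)
    have hqmod2 : q % (g*g) = b + g * d := by rw [Nat.mod_mul, qb, qd]
    have hQdiv : q % W / Y = d := by rw [eW, Nat.mod_mul_right_div_self, hddef]
    clear_value d
    -- a + b ≤ cg
    have hab_le : a + b ≤ cg := by
      have h1 : (a+b) * W ≤ p + q := by
        calc (a+b)*W = a*W + b*W := by ring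
        _ ≤ p + q := by omega
      have h2 : p + q < (cg + 1) * W := by
        rw [hcg]; rw [mul_comm g W]; exact hnlt
      have := lt_of_le_of_lt h1 h2
      have := (Nat.mul_lt_mul_right hWpos).mp this
      omega
    -- a + b = cg from units
    have hab : a + b = cg := by
      have h1 : (p + q) % g = (a + b) % g := by rw [Nat.add_mod, pa, qb]
      rw [hng, Nat.mod_eq_of_lt (by omega)] at h1
      omega
    -- c + d = 0 or g
    have hcd : c + d = 0 ∨ c + d = g := by
      have hkey : (cg + g*(c+d)) % (g*g) = cg := by
        have e : cg + g*(c+d) = (a + g*c) + (b + g*d) := by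
          have := Nat.mul_add g c d
          linarith
        rw [e, ← hpmod2, ← hqmod2, ← Nat.add_mod, hng2]
      rcases Nat.lt_or_ge (c+d) g with hlt | hge
      · left
        have hb1 : g*(c+d) + g ≤ g*g := by
          calc g*(c+d) + g = g*((c+d)+1) := by ring
          _ ≤ g*g := Nat.mul_le_mul_left g (by omega)
        have hlt2 : cg + g*(c+d) < g*g := by linarith
        rw [Nat.mod_eq_of_lt hlt2] at hkey
        have hz : g*(c+d) = 0 := by linarith
        rcases Nat.mul_eq_zero.mp hz with h | h <;> omega
      · right
        have e3 : cg + g*(c+d) = g*g + (cg + g*((c+d)-g)) := by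
          have e4 : g*(c+d) = g*g + g*((c+d)-g) := by
            calc g*(c+d) = g*(g + ((c+d)-g)) := by congr 1; omega
            _ = g*g + g*((c+d)-g) := by ring
          omega
        rw [e3, Nat.add_mod_left] at hkey
        have hb2 : g*((c+d)-g) + g + g ≤ g*g := by
          calc g*((c+d)-g) + g + g = g*(((c+d)-g)+2) := by ring
          _ ≤ g*g := Nat.mul_le_mul_left g (by omega)
        have hlt3 : cg + g*((c+d)-g) < g*g := by linarith
        rw [Nat.mod_eq_of_lt hlt3] at hkey
        have hz : g*((c+d)-g) = 0 := by linarith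
        rcases Nat.mul_eq_zero.mp hz with h | h <;> omega
    -- P + Q = r
    have hPp := Nat.div_add_mod p W
    have hQq := Nat.div_add_mod q W
    set P := p % W with hPdef
    set Q := q % W with hQdef
    clear_value P Q
    have hPQ : P + Q = cg * Y + m * (g*g) + cg := by
      have h1 : p + q = (a+b) * W + (P + Q) := by
        rw [← hadef] at hPp
        rw [← hbdef] at hQq
        calc p + q = W * a + P + (W * b + Q) := by linarith [hPp, hQq]
        _ = (a+b)*W + (P+Q) := by ring
      rw [← hn, hab] at h1
      linarith
    have hPc_low : c * Y ≤ P := by rw [← hPdiv]; exact Nat.div_mul_le_self P Y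
    have hPc_high : P < (c+1) * Y := by rw [← hPdiv]; exact upb P Y hYpos
    have hQd_low : d * Y ≤ Q := by rw [← hQdiv]; exact Nat.div_mul_le_self Q Y
    have hQd_high : Q < (d+1) * Y := by rw [← hQdiv]; exact upb Q Y hYpos
    rcases hcd with h | h
    · -- c = d = 0, but r ≥ cg*Y ≥ 2Y while P+Q < 2Y
      have hc0 : c = 0 := by omega
      have hd0 : d = 0 := by omega
      rw [hc0] at hPc_high; rw [hd0] at hQd_high
      have h2 : 2 * Y ≤ cg * Y := Nat.mul_le_mul_right _ hcg2
      have h3 : (0+1)*Y = Y := by ring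
      rw [h3] at hPc_high hQd_high
      linarith [Nat.zero_le (m*(g*g)), Nat.zero_le cg]
    · -- c + d = g: (c+d)*Y = g*Y = W*... ≤ P+Q = r < W
      have h1 : (c+d) * Y ≤ P + Q := by
        calc (c+d)*Y = c*Y + d*Y := by ring
        _ ≤ P + Q := by linarith
      rw [h, hPQ] at h1
      rw [mul_comm g Y, ← eW] at h1
      linarith
  -- Case B
  · push_neg at hqW
    obtain ⟨c2, hc2⟩ : ∃ c2, c2 + 1 = cg := ⟨g - 2, by omega⟩
    -- a ≥ c2
    have hpB : c2 * W + cg * Y ≤ p := by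
      have h1 : p + q = (c2 + 1) * W + cg * Y + m*(g*g) + cg := by rw [← hn, hc2]
      have h2 : (c2+1) * W = c2 * W + W := by ring
      linarith [Nat.zero_le (m*(g*g)), Nat.zero_le cg]
    have ha_ge : c2 ≤ a := by
      rw [hadef]
      rw [Nat.le_div_iff_mul_le hWpos]
      linarith [Nat.zero_le (cg*Y)]
    have ha_le : a ≤ cg := by omega
    rcases Nat.lt_or_ge a cg with hacg | hacg
    · -- a = c2
      have ha : a = c2 := by omega
      have hplt' : p < cg * W := by
        have : p < (a+1) * W := ha_high
        rwa [ha, hc2] at this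
      have hqbig : cg * Y < q := by
        have h1 : p + q = cg * W + cg * Y + m*(g*g) + cg := by rw [← hn]
        linarith [Nat.zero_le (m*(g*g)), Nat.zero_le cg]
      have hqdivY : q / Y = cg := by
        have hle : cg ≤ q / Y := (Nat.le_div_iff_mul_le hYpos).mpr (by linarith)
        have hlt : q / Y < g := (Nat.div_lt_iff_lt_mul hYpos).mpr (by rw [mul_comm g Y, ← eW]; exact hqW)
        omega
      have hq0 : q ≠ 0 := by
        intro h
        rw [h] at hqbig
        have : 0 < cg * Y := by positivity
        omega
      have hlenq : (Nat.digits g q).length = k + 3 := by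
        rw [Nat.digits_len g q (by omega) hq0, Nat.log_eq_of_pow_le_of_lt_pow
          (by rw [← hYdef]; calc Y = 1 * Y := by ring
              _ ≤ cg * Y := Nat.mul_le_mul_right _ (by omega)
              _ ≤ q := by linarith)
          (by rw [show k+2+1 = k+3 from rfl, ← hWdef]; exact hqW)]
      have qb : q % g = cg := by
        have h0 := pal_digit hg2 hq hlenq (i := 0) (by omega)
        rw [show k + 3 - 1 - 0 = k + 2 from rfl, pow_zero, Nat.div_one, ← hYdef, hqdivY,
          Nat.mod_eq_of_lt (show cg < g by omega)] at h0
        exact h0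
      have hcon : (p + q) % g = (a + cg) % g := by
        rw [Nat.add_mod, pa, qb]
      rw [hng, ha, show c2 + cg = g + (g - 3) by omega, Nat.add_mod_left,
        Nat.mod_eq_of_lt (by omega)] at hcon
      omega
    · -- a = cg
      have ha : a = cg := by omega
      have hqb0 : q % g = 0 := by
        have e : (p + q) % g = (cg + q % g) % g := by
          rw [Nat.add_mod, pa, ha]
        rw [hng] at e
        rcases Nat.eq_zero_or_pos (q % g) with h0 | h0
        · exact h0
        · exfalso
          have hblt : q % g < g := Nat.mod_lt _ (by omega)
          rw [show cg + q % g = g + (q % g - 1) by omega, Nat.add_mod_left,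
            Nat.mod_eq_of_lt (by omega)] at e
          omega
      have hq0 : q = 0 := pal_zero_s18 hg2 hq hqb0
      rw [hq0, add_zero] at hn hng hng2
      -- p = n; digit 1 vs digit k+2
      have hpY : p / Y % g = cg := by
        have hdiv : p / Y = cg * g + cg := by
          have hfac : p = Y * (cg * g + cg) + (m * (g*g) + cg) := by
            rw [← hn, eW]; ring
          rw [hfac, Nat.mul_add_div hYpos, Nat.div_eq_of_lt hs2, add_zero]
        have e5 : cg * g + cg = cg + cg * g := by ring
        rw [hdiv, e5, Nat.add_mul_mod_self_right, Nat.mod_eq_of_lt (by omega)]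
      have hp1 : p / g % g = 0 := by
        rw [← Nat.mod_mul_right_div_self, hng2, Nat.div_eq_of_lt (by omega)]
      rw [pc] at hp1
      have hccg : c = cg := by rw [hcdef, hpY]
      omega


lemma nlt (g k m : ℕ) (hg : 3 ≤ g) (hm : m < g ^ k) :
    (g-1) * g^(k+3) + (g-1) * g^(k+2) + m * g^2 + (g-1) < g^(k+4) := by
  obtain ⟨cg, hcg⟩ : ∃ c, c + 1 = g := ⟨g - 1, by omega⟩
  rw [show g - 1 = cg by omega]
  have h1 : m * g^2 + g^2 ≤ g^(k+2) := by
    calc m * g^2 + g^2 = (m+1) * g^2 := by ring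
    _ ≤ g^k * g^2 := Nat.mul_le_mul_right _ (by omega)
    _ = g^(k+2) := by rw [← pow_add]
  have h2 : cg < g^2 := by
    have : g ≤ g^2 := Nat.le_self_pow (by omega) g
    omega
  calc cg * g^(k+3) + cg * g^(k+2) + m * g^2 + cg
      < cg * g^(k+3) + cg * g^(k+2) + g^(k+2) := by linarith
    _ = cg * g^(k+3) + (cg+1) * g^(k+2) := by ring
    _ = cg * g^(k+3) + g^(k+3) := by rw [hcg, ← pow_succ']
    _ = (cg+1) * g^(k+3) := by ring
    _ = g^(k+4) := by rw [hcg, ← pow_succ']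

theorem not_sum_two_and_density (g : ℕ) (hg : 3 ≤ g) :
    (∀ l : ℕ, 4 ≤ l → ∀ m : ℕ, m < g ^ (l - 4) →
      ¬ ∃ p q : ℕ, IsBasePalindrome g p ∧ IsBasePalindrome g q ∧
        (g - 1) * g ^ (l - 1) + (g - 1) * g ^ (l - 2) + m * g ^ 2 + (g - 1) = p + q) ∧
    Filter.liminf (fun N : ℕ =>
      (({n : ℕ | n ≤ N ∧ ∃ p q : ℕ, IsBasePalindrome g p ∧ IsBasePalindrome g q ∧
          n = p + q}).ncard : ℝ) / N) Filter.atTop ≤ 1 - ((g : ℝ) ^ 4)⁻¹ := by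
  have part1 : ∀ l : ℕ, 4 ≤ l → ∀ m : ℕ, m < g ^ (l - 4) →
      ¬ ∃ p q : ℕ, IsBasePalindrome g p ∧ IsBasePalindrome g q ∧
        (g - 1) * g ^ (l - 1) + (g - 1) * g ^ (l - 2) + m * g ^ 2 + (g - 1) = p + q := by
    intro l hl m hm ⟨p, q, hp, hq, hn⟩
    rw [show l - 1 = (l-4) + 3 by omega, show l - 2 = (l-4) + 2 by omega] at hn
    rcases le_total q p with h | h
    · exact key g (l-4) m p q hg hm h hp hq hn
    · exact key g (l-4) m q p hg hm h hq hp (by rw [hn, add_comm])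
  refine ⟨part1, ?_⟩
  set S : ℕ → Set ℕ := fun N => {n : ℕ | n ≤ N ∧ ∃ p q : ℕ, IsBasePalindrome g p ∧
      IsBasePalindrome g q ∧ n = p + q} with hSdef
  -- counting bound
  have hcount : ∀ l : ℕ, 4 ≤ l → (S (g^l)).ncard + g^(l-4) ≤ g^l + 1 := by
    intro l hl
    set f : ℕ → ℕ := fun m => (g-1) * g^(l-1) + (g-1) * g^(l-2) + m * g^2 + (g-1) with hfdef
    have hinj : Function.Injective f := by
      intro m1 m2 h
      simp only [hfdef] at h
      have : m1 * g^2 = m2 * g^2 := by omega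
      exact Nat.eq_of_mul_eq_mul_right (by positivity) this
    set E : Set ℕ := f '' (Set.Iio (g^(l-4))) with hEdef
    have hflt : ∀ m, m < g^(l-4) → f m < g^l := by
      intro m hm
      have := nlt g (l-4) m hg hm
      rw [show (l-4)+3 = l - 1 by omega, show (l-4)+2 = l-2 by omega,
        show (l-4)+4 = l by omega] at this
      exact this
    have hE_sub : E ⊆ Set.Iic (g^l) := by
      rintro x ⟨m, hm, rfl⟩
      exact le_of_lt (hflt m hm)
    have hEfin : E.Finite := (Set.finite_Iio _).image _
    have hE_card : E.ncard = g^(l-4) := by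
      rw [hEdef, Set.ncard_image_of_injective _ hinj,
        show Set.Iio (g^(l-4)) = ↑(Finset.Iio (g^(l-4))) by simp,
        Set.ncard_coe_finset, Nat.card_Iio]
    have hIic_card : (Set.Iic (g^l)).ncard = g^l + 1 := by
      rw [show Set.Iic (g^l) = ↑(Finset.Iic (g^l)) by simp,
        Set.ncard_coe_finset, Nat.card_Iic]
    have hsub2 : S (g^l) ⊆ Set.Iic (g^l) \ E := by
      rintro n ⟨hn1, p, q, hp, hq, hn2⟩
      refine ⟨hn1, ?_⟩
      rintro ⟨m, hm, rfl⟩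
      exact part1 l hl m hm ⟨p, q, hp, hq, hn2⟩
    have hle : (S (g^l)).ncard ≤ (Set.Iic (g^l) \ E).ncard :=
      Set.ncard_le_ncard hsub2 ((Set.finite_Iic _).diff)
    rw [Set.ncard_diff hE_sub hEfin, hE_card, hIic_card] at hle
    have hBA : g^(l-4) ≤ g^l := Nat.pow_le_pow_right (by omega) (by omega)
    omega
  -- liminf bound
  apply le_of_forall_pos_le_add
  intro ε hε
  apply Filter.liminf_le_of_frequently_le _ (Filter.isBoundedUnder_of ⟨0, fun N => by positivity⟩)
  rw [Filter.frequently_atTop]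
  intro N₀
  set l : ℕ := max (max N₀ ⌈ε⁻¹⌉₊) 4 with hldef
  have hl4 : 4 ≤ l := le_max_right _ _
  have hgl : l < g^l := Nat.lt_pow_self (by omega : 1 < g)
  refine ⟨g^l, by omega, ?_⟩
  have hc := hcount l hl4
  have hgl0 : (0:ℝ) < (g:ℝ)^l := by positivity
  have hcast : ((g^l : ℕ) : ℝ) = (g:ℝ)^l := by push_cast; ring
  have h1 : ((S (g^l)).ncard : ℝ) ≤ (g:ℝ)^l + 1 - (g:ℝ)^(l-4) := by
    have := (Nat.cast_le (α := ℝ)).mpr hc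
    push_cast at this
    linarith
  have hepow : (g:ℝ)^l = (g:ℝ)^(l-4) * (g:ℝ)^4 := by
    rw [← pow_add]
    congr 1
    omega
  have hg0 : (0:ℝ) < (g:ℝ)^4 := by positivity
  have hg04 : (0:ℝ) < (g:ℝ)^(l-4) := by positivity
  have hinv : ((g:ℝ)^l)⁻¹ ≤ ε := by
    rw [inv_le_comm₀ hgl0 hε]
    calc ε⁻¹ ≤ (⌈ε⁻¹⌉₊ : ℝ) := Nat.le_ceil _
    _ ≤ (l : ℝ) := by exact_mod_cast le_trans (le_max_right N₀ _) (le_max_left _ 4)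
    _ ≤ (g:ℝ)^l := by exact_mod_cast le_of_lt hgl
  calc ((S (g^l)).ncard : ℝ) / ((g^l : ℕ) : ℝ)
      ≤ ((g:ℝ)^l + 1 - (g:ℝ)^(l-4)) / ((g:ℝ)^l) := by
        rw [hcast]
        exact (div_le_div_iff_of_pos_right hgl0).mpr h1
    _ ≤ 1 - ((g : ℝ) ^ 4)⁻¹ + ε := by
        rw [div_le_iff₀ hgl0]
        have : ((g:ℝ)^l)⁻¹ * (g:ℝ)^l = 1 := inv_mul_cancel₀ (ne_of_gt hgl0)
        have h2 : ((g:ℝ)^4)⁻¹ * (g:ℝ)^l = (g:ℝ)^(l-4) := by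
          rw [hepow]
          field_simp
        nlinarith [hinv, hgl0]
end
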